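/- arXiv:0804.3308 — 5 statements merged into one kernel-verified Lean document; each statement's English description precedes it below -/
import Mathlib

section
/- Let K be a linear subspace of L^1(Ω, F, P) and f ∈ L^∞(Ω, F, P). If sup{E[w f] : w ∈ K, ‖w⁻‖_1 ≤ 1} < ∞, then there exists g ∈ L^∞(Ω, F, P) with g ≥ f a.s. and E[w g] = 0 for all w ∈ K. -/
/-!
Write `N(u) = M ‖u⁻‖₁`, a sublinear functional on `L¹`. By homogeneity the hypothesis says
`E[w f] ≤ N(w)` on `K`, so Hahn–Banach extends `w ↦ E[w f]` to a linear `ψ ≤ N` on all of `L¹`;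
as `|ψ u| ≤ M ‖u‖₁`, `ψ` is continuous, hence `ψ u = E[u h]` for some `h ∈ L^∞`. Since `ψ ≤ 0` on
nonnegative functions, `h ≤ 0`, and `g = f - h` satisfies `g ≥ f` and `E[w g] = E[w f] - ψ w = 0`
on `K`.
-/

open MeasureTheory ENNReal

theorem le_mul_of_forall_le_of_le_one {E : Type*} [SMul ℝ E] {K : Set E}
    (hK : ∀ c : ℝ, 0 < c → ∀ w ∈ K, c • w ∈ K) {F G : E → ℝ}
    (hF : ∀ c : ℝ, 0 < c → ∀ w, F (c • w) = c * F w)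
    (hG : ∀ c : ℝ, 0 < c → ∀ w, G (c • w) = c * G w) (hG0 : ∀ w, 0 ≤ G w) {M : ℝ}
    (h : ∀ w ∈ K, G w ≤ 1 → F w ≤ M) {w : E} (hw : w ∈ K) : F w ≤ M * G w := by
  rcases (hG0 w).eq_or_lt with hG_zero | hG_pos
  · rw [← hG_zero, mul_zero]
    by_contra! hF_pos
    have hc : 0 < (|M| + 1) / F w := by positivity
    have := h _ (hK _ hc w hw) (by rw [hG _ hc, ← hG_zero, mul_zero]; exact zero_le_one)
    rw [hF _ hc, div_mul_cancel₀ _ hF_pos.ne'] at this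
    linarith [le_abs_self M]
  · have hc := inv_pos.2 hG_pos
    have := h _ (hK _ hc w hw) (by rw [hG _ hc, inv_mul_cancel₀ hG_pos.ne'])
    rwa [hF _ hc, inv_mul_le_iff₀ hG_pos, mul_comm] at this

namespace MeasureTheory

variable {α : Type*} [MeasurableSpace α] {μ : Measure α}

theorem indicatorConstLp_smul {E : Type*} [NormedAddCommGroup E] [NormedSpace ℝ E] {p : ℝ≥0∞}
    {s : Set α} (hs : MeasurableSet s) (hμs : μ s ≠ ∞) (c : ℝ) (x : E) :
    indicatorConstLp p hs hμs (c • x) = c • indicatorConstLp p hs hμs x := by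
  refine Lp.ext ?_
  filter_upwards [indicatorConstLp_coeFn (c := c • x), indicatorConstLp_coeFn (c := x),
    Lp.coeFn_smul c (indicatorConstLp p hs hμs x)] with ω h₁ h₂ h₃
  rw [h₁, h₃, Pi.smul_apply, h₂]
  by_cases hω : ω ∈ s <;> simp [hω]

theorem ae_abs_le_of_forall_abs_setIntegral_le [IsFiniteMeasure μ] {f : α → ℝ}
    (hf : Integrable f μ) {C : ℝ} (h : ∀ s, MeasurableSet s → |∫ x in s, f x ∂μ| ≤ C * μ.real s) :
    ∀ᵐ x ∂μ, |f x| ≤ C := by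
  have hC : ∀ s, C * μ.real s = ∫ _ in s, C ∂μ := fun s => by
    rw [setIntegral_const, smul_eq_mul, mul_comm]
  have hle : f ≤ᵐ[μ] fun _ => C := ae_le_of_forall_setIntegral_le hf (integrable_const C)
    fun s hs _ => (le_abs_self _).trans ((h s hs).trans_eq (hC s))
  have hge : -f ≤ᵐ[μ] fun _ => C := ae_le_of_forall_setIntegral_le hf.neg (integrable_const C)
    fun s hs _ => by
      rw [Pi.neg_def, integral_neg]
      exact (neg_le_abs _).trans ((h s hs).trans_eq (hC s))
  filter_upwards [hle, hge] with x h₁ h₂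
  exact abs_le.2 ⟨neg_le.1 h₂, h₁⟩

namespace L1

theorem ext_indicatorConstLp {F : Type*} [NormedAddCommGroup F] [NormedSpace ℝ F]
    {φ ψ : Lp ℝ 1 μ →L[ℝ] F}
    (h : ∀ s (hs : MeasurableSet s) (hμs : μ s ≠ ∞),
      φ (indicatorConstLp 1 hs hμs 1) = ψ (indicatorConstLp 1 hs hμs 1)) : φ = ψ := by
  ext x
  induction x using Lp.induction one_ne_top with
  | indicatorConst c hs hμs =>
    rw [Lp.simpleFunc.coe_indicatorConst, ← mul_one c, ← smul_eq_mul, indicatorConstLp_smul,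
      map_smul, map_smul, h]
  | add _ _ _ hφ hψ => rw [map_add, map_add, hφ, hψ]
  | isClosed => exact isClosed_eq φ.continuous ψ.continuous

theorem lpPairing_mul_apply_of_ae_eq {g : Lp ℝ ∞ μ} {g' : α → ℝ} (hg : g =ᵐ[μ] g')
    {u : Lp ℝ 1 μ} {w : α → ℝ} (hu : u =ᵐ[μ] w) :
    (ContinuousLinearMap.mul ℝ ℝ).lpPairing μ ∞ 1 g u = ∫ x, w x * g' x ∂μ := by
  rw [ContinuousLinearMap.lpPairing_eq_integral]
  refine integral_congr_ae ?_
  filter_upwards [hg, hu] with x h₁ h₂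
  simp [h₁, h₂, mul_comm]

theorem lpPairing_mul_indicatorConstLp (g : Lp ℝ ∞ μ) {s : Set α} (hs : MeasurableSet s)
    (hμs : μ s ≠ ∞) :
    (ContinuousLinearMap.mul ℝ ℝ).lpPairing μ ∞ 1 g (indicatorConstLp 1 hs hμs 1) =
      ∫ x in s, g x ∂μ := by
  rw [lpPairing_mul_apply_of_ae_eq (Filter.EventuallyEq.refl _ _) indicatorConstLp_coeFn,
    ← integral_indicator hs]
  congr 1 with x
  by_cases hx : x ∈ s <;> simp [hx]

variable [IsFiniteMeasure μ]

variable (μ) in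
/-- The inclusion `L² ⊆ L¹`, realised as Hölder multiplication by the constant `1 ∈ L²`. -/
noncomputable def L2ToL1 : Lp ℝ 2 μ →L[ℝ] Lp ℝ 1 μ :=
  (ContinuousLinearMap.mul ℝ ℝ).holderL μ 2 2 1 (Lp.const 2 μ 1)

theorem coeFn_L2ToL1 (y : Lp ℝ 2 μ) : L2ToL1 μ y =ᵐ[μ] y := by
  filter_upwards [(ContinuousLinearMap.mul ℝ ℝ).coeFn_holder (r := 1) (Lp.const 2 μ (1 : ℝ)) y,
    Lp.coeFn_const (p := 2) (μ := μ) (c := (1 : ℝ))] with x h₁ h₂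
  change ContinuousLinearMap.holder 1 _ _ y x = _
  rw [h₁, ContinuousLinearMap.mul_apply', h₂, Function.const_apply, one_mul]

theorem L2ToL1_indicatorConstLp {s : Set α} (hs : MeasurableSet s) (hμs : μ s ≠ ∞) (c : ℝ) :
    L2ToL1 μ (indicatorConstLp 2 hs hμs c) = indicatorConstLp 1 hs hμs c :=
  Lp.ext ((coeFn_L2ToL1 _).trans (indicatorConstLp_coeFn.trans indicatorConstLp_coeFn.symm))

-- Riesz representation of `ψ` restricted to `L²`.
theorem exists_integrable_setIntegral_eq (ψ : StrongDual ℝ (Lp ℝ 1 μ)) :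
    ∃ h : α → ℝ, Integrable h μ ∧ ∀ s (hs : MeasurableSet s),
      ∫ x in s, h x ∂μ = ψ (indicatorConstLp 1 hs (measure_ne_top μ s) 1) := by
  set h := (InnerProductSpace.toDual ℝ (Lp ℝ 2 μ)).symm (ψ ∘L L2ToL1 μ)
  refine ⟨h, (Lp.memLp h).integrable one_le_two, fun s hs => ?_⟩
  rw [← L2.inner_indicatorConstLp_one hs (measure_ne_top μ s), real_inner_comm,
    InnerProductSpace.toDual_symm_apply, ContinuousLinearMap.comp_apply, L2ToL1_indicatorConstLp]

-- The set function `s ↦ ψ 𝟙ₛ` has a density, which is bounded by `‖ψ‖` since `‖𝟙ₛ‖₁ = μ s`.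
theorem exists_lpPairing_mul_eq (ψ : StrongDual ℝ (Lp ℝ 1 μ)) :
    ∃ g : Lp ℝ ∞ μ, (ContinuousLinearMap.mul ℝ ℝ).lpPairing μ ∞ 1 g = ψ := by
  obtain ⟨h, hint, hset⟩ := exists_integrable_setIntegral_eq ψ
  have hbound : ∀ᵐ x ∂μ, |h x| ≤ ‖ψ‖ := by
    refine ae_abs_le_of_forall_abs_setIntegral_le hint fun s hs => ?_
    rw [hset s hs, ← Real.norm_eq_abs]
    refine (ψ.le_opNorm _).trans_eq ?_
    rw [norm_indicatorConstLp one_ne_zero one_ne_top]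
    simp
  have hmem : MemLp h ∞ μ := memLp_top_of_bound hint.1 ‖ψ‖ (by simpa using hbound)
  refine ⟨hmem.toLp h, ext_indicatorConstLp fun s hs hμs => ?_⟩
  rw [lpPairing_mul_indicatorConstLp, ← hset s hs]
  exact setIntegral_congr_ae hs (hmem.coeFn_toLp.mono fun x hx _ => hx)

end L1

variable (μ) in
noncomputable def negPartIntegral (u : α → ℝ) : ℝ := ∫ x, max (-(u x)) 0 ∂μ

theorem negPartIntegral_nonneg (u : α → ℝ) : 0 ≤ negPartIntegral μ u :=
  integral_nonneg fun _ => le_max_right _ _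

theorem negPartIntegral_congr_ae {u v : α → ℝ} (h : u =ᵐ[μ] v) :
    negPartIntegral μ u = negPartIntegral μ v :=
  integral_congr_ae (h.mono fun x hx => by simp only [hx])

theorem negPartIntegral_smul {c : ℝ} (hc : 0 ≤ c) (u : α → ℝ) :
    negPartIntegral μ (c • u) = c * negPartIntegral μ u := by
  rw [negPartIntegral, negPartIntegral, ← integral_const_mul]
  congr 1 with x
  rw [Pi.smul_apply, smul_eq_mul, mul_max_of_nonneg _ _ hc, mul_zero, mul_neg]

theorem negPartIntegral_add_le {u v : α → ℝ} (hu : Integrable u μ) (hv : Integrable v μ) :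
    negPartIntegral μ (u + v) ≤ negPartIntegral μ u + negPartIntegral μ v := by
  have hneg : ∀ {w : α → ℝ}, Integrable w μ → Integrable (fun x => max (-(w x)) 0) μ :=
    fun hw => hw.neg.pos_part
  rw [negPartIntegral, negPartIntegral, negPartIntegral, ← integral_add (hneg hu) (hneg hv)]
  refine integral_mono (hneg (hu.add hv)) ((hneg hu).add (hneg hv)) fun x => ?_
  simp only [Pi.add_apply]
  exact max_le (by linarith [le_max_left (-(u x)) 0, le_max_left (-(v x)) 0])
    (add_nonneg (le_max_right _ _) (le_max_right _ _))

theorem negPartIntegral_le_norm (x : Lp ℝ 1 μ) : negPartIntegral μ x ≤ ‖x‖ := by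
  rw [L1.norm_eq_integral_norm]
  exact integral_mono (L1.integrable_coeFn x).neg.pos_part (L1.integrable_coeFn x).norm
    fun ω => max_le (neg_le_abs _) (abs_nonneg _)

theorem negPartIntegral_eq_zero_of_nonneg {u : α → ℝ} (h : 0 ≤ᵐ[μ] u) :
    negPartIntegral μ u = 0 :=
  integral_eq_zero_of_ae (h.mono fun _ hx => max_eq_right (neg_nonpos.2 hx))

namespace L1

variable (μ) in
def aeClasses (K : Submodule ℝ (α → ℝ)) : Submodule ℝ (Lp ℝ 1 μ) where
  carrier := {x | ∃ w ∈ K, w =ᵐ[μ] x}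
  add_mem' := by
    rintro x y ⟨u, hu, hux⟩ ⟨v, hv, hvy⟩
    exact ⟨u + v, K.add_mem hu hv, (hux.add hvy).trans (Lp.coeFn_add x y).symm⟩
  zero_mem' := ⟨0, K.zero_mem, (Lp.coeFn_zero ℝ 1 μ).symm⟩
  smul_mem' := by
    rintro c x ⟨u, hu, hux⟩
    exact ⟨c • u, K.smul_mem c hu, (hux.const_smul c).trans (Lp.coeFn_smul c x).symm⟩

theorem mem_aeClasses {K : Submodule ℝ (α → ℝ)} {x : Lp ℝ 1 μ} :
    x ∈ aeClasses μ K ↔ ∃ w ∈ K, w =ᵐ[μ] x :=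
  Iff.rfl

theorem exists_extension_le_negPartIntegral (S : Submodule ℝ (Lp ℝ 1 μ)) (φ : S →ₗ[ℝ] ℝ)
    {M : ℝ} (hM : 0 ≤ M) (hφ : ∀ x : S, φ x ≤ M * negPartIntegral μ (x : Lp ℝ 1 μ)) :
    ∃ ψ : StrongDual ℝ (Lp ℝ 1 μ), (∀ x : S, ψ x = φ x) ∧
      ∀ x, ψ x ≤ M * negPartIntegral μ x := by
  obtain ⟨ψ, hψφ, hψ⟩ := exists_extension_of_le_sublinear ⟨S, φ⟩
    (fun x : Lp ℝ 1 μ => M * negPartIntegral μ x)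
    (fun c hc x => by
      rw [negPartIntegral_congr_ae (Lp.coeFn_smul c x), negPartIntegral_smul hc.le, mul_left_comm])
    (fun x y => by
      rw [negPartIntegral_congr_ae (Lp.coeFn_add x y), ← mul_add]
      exact mul_le_mul_of_nonneg_left
        (negPartIntegral_add_le (L1.integrable_coeFn x) (L1.integrable_coeFn y)) hM)
    hφ
  have hψ_le_norm : ∀ x, ψ x ≤ M * ‖x‖ := fun x =>
    (hψ x).trans (mul_le_mul_of_nonneg_left (negPartIntegral_le_norm x) hM)
  refine ⟨ψ.mkContinuous M fun x => abs_le.2 ⟨?_, hψ_le_norm x⟩, hψφ, hψ⟩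
  have := hψ_le_norm (-x)
  rw [map_neg, norm_neg] at this
  linarith

theorem ae_nonpos_of_lpPairing_mul_nonpos [IsFiniteMeasure μ] {g : Lp ℝ ∞ μ}
    (hg : ∀ x : Lp ℝ 1 μ, 0 ≤ᵐ[μ] x → (ContinuousLinearMap.mul ℝ ℝ).lpPairing μ ∞ 1 g x ≤ 0) :
    ∀ᵐ ω ∂μ, g ω ≤ 0 := by
  refine (ae_nonneg_of_forall_setIntegral_nonneg ((Lp.memLp g).integrable le_top).neg
    fun s hs _ => ?_).mono fun ω hω => neg_nonneg.1 hω
  have := hg (indicatorConstLp 1 hs (measure_ne_top μ s) 1) <|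
    indicatorConstLp_coeFn.mono fun ω hω => by
      rw [hω]
      exact Set.indicator_nonneg (fun _ _ => zero_le_one) ω
  rw [lpPairing_mul_indicatorConstLp] at this
  rw [integral_neg']
  exact neg_nonneg.2 this

end L1

end MeasureTheory

theorem stmt_1 {Ω : Type*} [MeasurableSpace Ω] (P : Measure Ω) [IsProbabilityMeasure P]
    (K : Set (Ω → ℝ))
    (hK0 : (0 : Ω → ℝ) ∈ K)
    (hKadd : ∀ u v : Ω → ℝ, u ∈ K → v ∈ K → u + v ∈ K)
    (hKsmul : ∀ (c : ℝ) (u : Ω → ℝ), u ∈ K → c • u ∈ K)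
    (hKint : ∀ u ∈ K, Integrable u P)
    (f : Ω → ℝ) (hf : Measurable f) (hfb : ∃ C : ℝ, ∀ᵐ ω ∂P, |f ω| ≤ C)
    (M : ℝ)
    (hM : ∀ w ∈ K, (∫ ω, max (-(w ω)) 0 ∂P) ≤ 1 → (∫ ω, w ω * f ω ∂P) ≤ M) :
    ∃ g : Ω → ℝ, Measurable g ∧ (∃ C : ℝ, ∀ᵐ ω ∂P, |g ω| ≤ C) ∧
      (∀ᵐ ω ∂P, f ω ≤ g ω) ∧ ∀ w ∈ K, (∫ ω, w ω * g ω ∂P) = 0 := by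
  obtain ⟨Cf, hCf⟩ := hfb
  have hf_top : MemLp f ∞ P := memLp_top_of_bound hf.aestronglyMeasurable Cf (by simpa using hCf)
  set pairing := (ContinuousLinearMap.mul ℝ ℝ).lpPairing P ∞ 1
  have hM0 : 0 ≤ M := by simpa using hM 0 hK0 (by simp)
  let K' : Submodule ℝ (Ω → ℝ) :=
    { carrier := K, add_mem' := hKadd _ _, zero_mem' := hK0, smul_mem' := hKsmul }
  have hφ : ∀ x : L1.aeClasses P K', pairing (hf_top.toLp f) x ≤ M * negPartIntegral P x := by
    rintro ⟨x, w, hw, hwx⟩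
    rw [L1.lpPairing_mul_apply_of_ae_eq hf_top.coeFn_toLp hwx.symm,
      negPartIntegral_congr_ae hwx.symm]
    refine le_mul_of_forall_le_of_le_one (fun c _ => hKsmul c)
      (fun c _ w => by simp only [Pi.smul_apply, smul_eq_mul, mul_assoc, integral_const_mul])
      (fun c hc => negPartIntegral_smul hc.le) negPartIntegral_nonneg hM hw
  obtain ⟨ψ, hψ_ext, hψ_le⟩ := L1.exists_extension_le_negPartIntegral _
    ((pairing (hf_top.toLp f)).toLinearMap.domRestrict _) hM0 hφ
  obtain ⟨h, rfl⟩ := L1.exists_lpPairing_mul_eq ψ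
  have hh_nonpos : ∀ᵐ ω ∂P, h ω ≤ 0 := L1.ae_nonpos_of_lpPairing_mul_nonpos fun x hx =>
    (hψ_le x).trans_eq (by rw [negPartIntegral_eq_zero_of_nonneg hx, mul_zero])
  refine ⟨f - h, hf.sub (Lp.stronglyMeasurable h).measurable, ⟨Cf + lpNorm h ∞ P, ?_⟩, ?_,
    fun w hw => ?_⟩
  · filter_upwards [hCf, ae_le_lpNorm_exponent_top (Lp.memLp h)] with ω hfω hhω
    rw [Real.norm_eq_abs] at hhω
    exact (abs_sub _ _).trans (add_le_add hfω hhω)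
  · filter_upwards [hh_nonpos] with ω hω
    simpa using hω
  · have hw_toL1 := (hKint w hw).coeFn_toL1
    have hψw := hψ_ext ⟨_, L1.mem_aeClasses.2 ⟨w, hw, hw_toL1.symm⟩⟩
    rw [LinearMap.domRestrict_apply, ContinuousLinearMap.coe_coe] at hψw
    rw [← L1.lpPairing_mul_apply_of_ae_eq ((Lp.coeFn_sub _ _).trans
        (hf_top.coeFn_toLp.sub (Filter.EventuallyEq.refl _ _))) hw_toL1,
      map_sub, sub_apply, ← hψw, sub_self]
end

section
/- Let μ be a Borel probability measure on ℝ^d with finite first moment and support κ. If 0 lies in the relative interior of the convex hull of κ, then for every nonzero h in the linear span of κ one has ∫ (h,x)⁻ μ(dx) > 0, and consequently the set T = {h ∈ span(κ) : ∫ (h,x)⁻ μ(dx) ≤ 1} is compact. -/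
open MeasureTheory

/-- Support of a Borel measure on a metric space. -/
def mSupport {E : Type*} [MeasurableSpace E] [PseudoMetricSpace E] (μ : Measure E) : Set E :=
  {x | ∀ ε > 0, 0 < μ (Metric.ball x ε)}

/-- `ν` is a regular conditional distribution of `ξ` given the sub-σ-algebra `H`. -/
def IsRCD {Ω E : Type*} [MeasurableSpace Ω] [MeasurableSpace E]
    (H : MeasurableSpace Ω) (P : Measure Ω) (ξ : Ω → E) (ν : Ω → Measure E) : Prop :=
  (∀ ω, IsProbabilityMeasure (ν ω)) ∧
  (∀ B : Set E, MeasurableSet B → Measurable[H] fun ω => ν ω B) ∧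
  (∀ B : Set E, MeasurableSet B →
    (fun ω => (ν ω B).toReal) =ᵐ[P] condExp H P (Set.indicator (ξ ⁻¹' B) fun _ => (1 : ℝ)))

/-!
Write `F h = ∫ (h,x)⁻ μ(dx)`. If `F h = 0`, then `(h,x) ≥ 0` on the support `κ`, hence on
`conv κ`. Since `0` is in the relative interior of `conv κ` and `h` lies in the direction of its
affine hull, `-t h ∈ conv κ` for small `t > 0`, which forces `‖h‖² ≤ 0`. As for compactness,
`F` is Lipschitz and positively homogeneous, so it is bounded below by some `c > 0` on the unit
sphere of `span κ`, and `T` lies in the ball of radius `1 / c`.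
-/

open Filter Topology RealInnerProductSpace

theorem eq_zero_on_mSupport_of_integral_eq_zero {X : Type*} [MeasurableSpace X]
    [PseudoMetricSpace X] {μ : Measure X} {f : X → ℝ} (hf : Continuous f) (hf0 : 0 ≤ f)
    (hfi : Integrable f μ) (hint : ∫ x, f x ∂μ = 0) : ∀ x ∈ mSupport μ, f x = 0 := by
  have hnull : μ {y | f y ≠ 0} = 0 :=
    ae_iff.mp ((integral_eq_zero_iff_of_nonneg hf0 hfi).mp hint)
  intro x hx
  by_contra hfx
  obtain ⟨ε, hε, hball⟩ := Metric.isOpen_iff.mp (isOpen_ne_fun hf continuous_const) x hfx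
  exact (hx ε hε).ne' (measure_mono_null hball hnull)

theorem eventually_smul_mem_of_zero_mem_intrinsicInterior {V : Type*} [AddCommGroup V]
    [Module ℝ V] [TopologicalSpace V] [ContinuousSMul ℝ V] {C : Set V}
    (hC : 0 ∈ intrinsicInterior ℝ C) {v : V} (hv : v ∈ vectorSpan ℝ C) :
    ∀ᶠ t in 𝓝 (0 : ℝ), t • v ∈ C := by
  obtain ⟨y, hy, hy0⟩ := mem_intrinsicInterior.mp hC
  have hmem (t : ℝ) : t • v ∈ affineSpan ℝ C := by
    simpa [hy0] using AffineSubspace.vadd_mem_of_mem_direction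
      (by rw [direction_affineSpan]; exact Submodule.smul_mem _ t hv) y.2
  let γ : ℝ → affineSpan ℝ C := fun t => ⟨t • v, hmem t⟩
  have hγ0 : γ 0 = y := Subtype.ext (by simp [γ, hy0])
  have hγ : Continuous γ := (continuous_id.smul continuous_const).subtype_mk _
  filter_upwards [hγ.continuousAt.preimage_mem_nhds (hγ0 ▸ isOpen_interior.mem_nhds hy)]
    with t ht using show γ t ∈ ((↑) ⁻¹' C : Set (affineSpan ℝ C)) from interior_subset ht

theorem span_le_vectorSpan_convexHull {V : Type*} [AddCommGroup V] [Module ℝ V] {s : Set V}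
    (h0 : (0 : V) ∈ convexHull ℝ s) :
    Submodule.span ℝ s ≤ vectorSpan ℝ (convexHull ℝ s) :=
  Submodule.span_le.mpr fun x hx => by
    simpa using vsub_mem_vectorSpan ℝ (subset_convexHull ℝ s hx) h0

section InnerProductSpace

variable {E : Type*} [NormedAddCommGroup E] [InnerProductSpace ℝ E]

theorem eq_zero_of_mem_span_of_forall_inner_nonneg {s : Set E}
    (h0 : (0 : E) ∈ intrinsicInterior ℝ (convexHull ℝ s)) {h : E}
    (hh : h ∈ Submodule.span ℝ s) (hnn : ∀ x ∈ s, 0 ≤ ⟪h, x⟫) : h = 0 := by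
  have hhull : convexHull ℝ s ⊆ {x | 0 ≤ ⟪h, x⟫} :=
    convexHull_min hnn (convex_halfSpace_ge (innerₗ E h).isLinear 0)
  have hsmul := eventually_smul_mem_of_zero_mem_intrinsicInterior h0
    (span_le_vectorSpan_convexHull (intrinsicInterior_subset h0) hh)
  obtain ⟨t, hth, ht⟩ := ((hsmul.filter_mono nhdsWithin_le_nhds).and
    (self_mem_nhdsWithin : Set.Iio (0 : ℝ) ∈ 𝓝[<] 0)).exists
  have : 0 ≤ t * ⟪h, h⟫ := by simpa [real_inner_smul_right] using hhull hth
  exact real_inner_self_nonpos.mp (nonpos_of_mul_nonneg_right this ht)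

theorem abs_max_neg_inner_sub_le (h₁ h₂ x : E) :
    |max (-⟪h₁, x⟫) 0 - max (-⟪h₂, x⟫) 0| ≤ ‖h₁ - h₂‖ * ‖x‖ :=
  calc |max (-⟪h₁, x⟫) 0 - max (-⟪h₂, x⟫) 0| ≤ |-⟪h₁, x⟫ - -⟪h₂, x⟫| :=
        abs_max_sub_max_le_abs _ _ _
    _ = |⟪h₁ - h₂, x⟫| := by rw [inner_sub_left, neg_sub_neg, abs_sub_comm]
    _ ≤ ‖h₁ - h₂‖ * ‖x‖ := abs_real_inner_le_norm _ _

theorem max_neg_inner_le (h x : E) : max (-⟪h, x⟫) 0 ≤ ‖h‖ * ‖x‖ :=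
  max_le ((neg_le_abs _).trans (abs_real_inner_le_norm h x)) (by positivity)

theorem max_neg_inner_smul {t : ℝ} (ht : 0 ≤ t) (h x : E) :
    max (-⟪t • h, x⟫) 0 = t * max (-⟪h, x⟫) 0 := by
  rw [real_inner_smul_left, mul_max_of_nonneg _ _ ht, mul_zero, mul_neg]

variable [MeasurableSpace E] {μ : Measure E}

noncomputable def negInnerIntegral (μ : Measure E) (h : E) : ℝ :=
  ∫ x, max (-⟪h, x⟫) 0 ∂μ

theorem negInnerIntegral_nonneg (h : E) : 0 ≤ negInnerIntegral μ h :=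
  integral_nonneg fun _ => le_max_right _ _

theorem negInnerIntegral_smul {t : ℝ} (ht : 0 ≤ t) (h : E) :
    negInnerIntegral μ (t • h) = t * negInnerIntegral μ h := by
  simp only [negInnerIntegral, max_neg_inner_smul ht, integral_const_mul]

variable [OpensMeasurableSpace E] (hmom : Integrable (fun x => ‖x‖) μ)
include hmom

theorem integrable_max_neg_inner (h : E) : Integrable (fun x => max (-⟪h, x⟫) 0) μ := by
  refine (hmom.const_mul ‖h‖).mono'
    ((continuous_const.inner continuous_id).neg.max continuous_const).aestronglyMeasurable
    (ae_of_all _ fun x => ?_)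
  rw [Real.norm_of_nonneg (le_max_right _ _)]
  exact max_neg_inner_le h x

theorem dist_negInnerIntegral_le (h₁ h₂ : E) :
    dist (negInnerIntegral μ h₁) (negInnerIntegral μ h₂) ≤ (∫ x, ‖x‖ ∂μ) * dist h₁ h₂ := by
  rw [dist_eq_norm, dist_eq_norm, negInnerIntegral, negInnerIntegral,
    ← integral_sub (integrable_max_neg_inner hmom h₁) (integrable_max_neg_inner hmom h₂)]
  calc _ ≤ ∫ x, ‖h₁ - h₂‖ * ‖x‖ ∂μ :=
        norm_integral_le_of_norm_le (hmom.const_mul _)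
          (ae_of_all _ fun x => abs_max_neg_inner_sub_le h₁ h₂ x)
    _ = _ := by rw [integral_const_mul, mul_comm]

theorem continuous_negInnerIntegral : Continuous (negInnerIntegral μ) :=
  (LipschitzWith.of_dist_le' (dist_negInnerIntegral_le hmom)).continuous

theorem negInnerIntegral_pos {h : E}
    (h0 : (0 : E) ∈ intrinsicInterior ℝ (convexHull ℝ (mSupport μ)))
    (hh : h ∈ Submodule.span ℝ (mSupport μ)) (hne : h ≠ 0) : 0 < negInnerIntegral μ h := by
  refine (negInnerIntegral_nonneg h).lt_of_ne fun hzero => hne ?_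
  refine eq_zero_of_mem_span_of_forall_inner_nonneg h0 hh fun x hx => ?_
  have := eq_zero_on_mSupport_of_integral_eq_zero
    ((continuous_const.inner continuous_id).neg.max continuous_const)
    (fun _ => le_max_right _ _) (integrable_max_neg_inner hmom h) hzero.symm x hx
  exact neg_nonpos.mp (max_eq_right_iff.mp this)

end InnerProductSpace

theorem isCompact_setOf_mem_and_le_one {E : Type*} [NormedAddCommGroup E] [NormedSpace ℝ E]
    [FiniteDimensional ℝ E] (V : Submodule ℝ E) {F : E → ℝ} (hF : Continuous F)
    (hsmul : ∀ t : ℝ, 0 ≤ t → ∀ h, F (t • h) = t * F h)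
    (hpos : ∀ h ∈ V, h ≠ 0 → 0 < F h) :
    IsCompact {h | h ∈ V ∧ F h ≤ 1} := by
  have hV : IsClosed (V : Set E) := V.closed_of_finiteDimensional
  obtain ⟨c, hc, hcF⟩ := ((isCompact_sphere (0 : E) 1).inter_right hV).exists_forall_le'
    hF.continuousOn fun u ⟨hu, huV⟩ => hpos u huV (ne_zero_of_mem_unit_sphere ⟨u, hu⟩)
  refine (isCompact_closedBall (0 : E) c⁻¹).of_isClosed_subset
    (hV.inter (isClosed_le hF continuous_const)) fun h ⟨hhV, hF1⟩ => ?_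
  rcases eq_or_ne h 0 with rfl | hne
  · simpa using hc.le
  have hnorm : 0 < ‖h‖ := norm_pos_iff.mpr hne
  have hu := hcF (‖h‖⁻¹ • h) ⟨by simp [norm_smul, hnorm.ne'], V.smul_mem _ hhV⟩
  rw [hsmul _ (inv_nonneg.mpr hnorm.le)] at hu
  rw [mem_closedBall_zero_iff, le_inv_comm₀ hnorm hc]
  exact hu.trans (mul_le_of_le_one_right (inv_nonneg.mpr hnorm.le) hF1)

theorem stmt_5_general (d : ℕ) (μ : Measure (EuclideanSpace ℝ (Fin d)))
    (hmom : Integrable (fun x => ‖x‖) μ)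
    (h0 : (0 : EuclideanSpace ℝ (Fin d)) ∈
      intrinsicInterior ℝ (convexHull ℝ (mSupport μ))) :
    (∀ h : EuclideanSpace ℝ (Fin d), h ∈ Submodule.span ℝ (mSupport μ) → h ≠ 0 →
        0 < ∫ x, max (-(inner ℝ h x : ℝ)) 0 ∂μ) ∧
      IsCompact {h : EuclideanSpace ℝ (Fin d) |
        h ∈ Submodule.span ℝ (mSupport μ) ∧ (∫ x, max (-(inner ℝ h x : ℝ)) 0 ∂μ) ≤ 1} := by
  have hpos : ∀ h ∈ Submodule.span ℝ (mSupport μ), h ≠ 0 → 0 < negInnerIntegral μ h :=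
    fun _ hh hne => negInnerIntegral_pos hmom h0 hh hne
  exact ⟨hpos, isCompact_setOf_mem_and_le_one _ (continuous_negInnerIntegral hmom)
    (fun _ => negInnerIntegral_smul) hpos⟩

theorem stmt_5 (d : ℕ) (μ : Measure (EuclideanSpace ℝ (Fin d))) [IsProbabilityMeasure μ]
    (hmom : Integrable (fun x => ‖x‖) μ)
    (h0 : (0 : EuclideanSpace ℝ (Fin d)) ∈
      intrinsicInterior ℝ (convexHull ℝ (mSupport μ))) :
    (∀ h : EuclideanSpace ℝ (Fin d), h ∈ Submodule.span ℝ (mSupport μ) → h ≠ 0 →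
        0 < ∫ x, max (-(inner ℝ h x : ℝ)) 0 ∂μ) ∧
      IsCompact {h : EuclideanSpace ℝ (Fin d) |
        h ∈ Submodule.span ℝ (mSupport μ) ∧ (∫ x, max (-(inner ℝ h x : ℝ)) 0 ∂μ) ≤ 1} :=
  stmt_5_general d μ hmom h0
end

section
/- Let μ be a Borel probability measure on ℝ^d with support κ. If 0 ∈ ri(conv κ) and h ∈ span(κ) satisfies (h, x) ≥ 0 for μ-almost every x, then h = 0. -/
open MeasureTheory

/-!
The half-space `{x | 0 ≤ ⟪h, x⟫}` is closed and of full measure, so it contains the support `κ`,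
hence `conv κ`. As `0` lies in the relative interior of `conv κ`, every `x ∈ κ` has a negative
multiple `t • x ∈ conv κ`, which forces `⟪h, x⟫ = 0`. So `⟪h, ·⟫` vanishes on `span κ ∋ h`.
-/

open Filter Topology

theorem mSupport_subset_of_ae_mem {E : Type*} [MeasurableSpace E] [PseudoMetricSpace E]
    {μ : Measure E} {C : Set E} (hC : IsClosed C) (hae : ∀ᵐ x ∂μ, x ∈ C) :
    mSupport μ ⊆ C := by
  intro x hx
  by_contra hxC
  obtain ⟨ε, hε, hball⟩ := Metric.isOpen_iff.mp hC.isOpen_compl x hxC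
  exact (hx ε hε).ne' (measure_mono_null hball (ae_iff.mp hae))

section IntrinsicInterior

variable {𝕜 E : Type*} [Ring 𝕜] [TopologicalSpace 𝕜] [AddCommGroup E] [Module 𝕜 E]
  [TopologicalSpace E] [ContinuousSMul 𝕜 E] {s : Set E} {x : E}

theorem eventually_smul_mem_of_zero_mem_intrinsicInterior_s6 (h0 : (0 : E) ∈ intrinsicInterior 𝕜 s)
    (hx : x ∈ affineSpan 𝕜 s) : ∀ᶠ t in 𝓝 (0 : 𝕜), t • x ∈ s := by
  obtain ⟨y, hy, hy0⟩ := mem_intrinsicInterior.mp h0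
  have hline : ∀ t : 𝕜, t • x ∈ affineSpan 𝕜 s := fun t => by
    simpa [hy0] using (affineSpan 𝕜 s).smul_vsub_vadd_mem t hx y.2 y.2
  set g : 𝕜 → affineSpan 𝕜 s := fun t => ⟨t • x, hline t⟩
  have hg0 : g 0 = y := Subtype.ext (by simp [g, hy0])
  have hcont : Continuous g := (continuous_id.smul continuous_const).subtype_mk hline
  have hnhds : g ⁻¹' interior (Subtype.val ⁻¹' s) ∈ 𝓝 (0 : 𝕜) :=
    hcont.continuousAt.preimage_mem_nhds (hg0 ▸ isOpen_interior.mem_nhds hy)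
  exact mem_of_superset hnhds fun t ht => interior_subset (s := Subtype.val ⁻¹' s) ht

end IntrinsicInterior

theorem LinearMap.eq_zero_of_nonneg_of_zero_mem_intrinsicInterior {E : Type*} [AddCommGroup E]
    [Module ℝ E] [TopologicalSpace E] [ContinuousSMul ℝ E] {s : Set E} (f : E →ₗ[ℝ] ℝ)
    (h0 : (0 : E) ∈ intrinsicInterior ℝ s) (hf : ∀ y ∈ s, 0 ≤ f y) {x : E} (hx : x ∈ s) :
    f x = 0 := by
  obtain ⟨t, ht, hts⟩ :=
    (eventually_smul_mem_of_zero_mem_intrinsicInterior_s6 h0 (subset_affineSpan ℝ s hx)).exists_lt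
  have hneg : 0 ≤ t * f x := by simpa using hf _ hts
  exact le_antisymm (nonpos_of_mul_nonneg_right hneg ht) (hf x hx)

theorem stmt_6_general (d : ℕ) (μ : Measure (EuclideanSpace ℝ (Fin d)))
    (h0 : (0 : EuclideanSpace ℝ (Fin d)) ∈
      intrinsicInterior ℝ (convexHull ℝ (mSupport μ)))
    (h : EuclideanSpace ℝ (Fin d)) (hspan : h ∈ Submodule.span ℝ (mSupport μ))
    (hpos : ∀ᵐ x ∂μ, 0 ≤ (inner ℝ h x : ℝ)) :
    h = 0 := by
  set f := innerₛₗ ℝ h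
  have hκ : mSupport μ ⊆ {x | 0 ≤ f x} :=
    mSupport_subset_of_ae_mem (isClosed_le continuous_const (continuous_const.inner continuous_id))
      hpos
  have hconv : ∀ y ∈ convexHull ℝ (mSupport μ), 0 ≤ f y :=
    convexHull_min hκ (convex_halfSpace_ge f.isLinear 0)
  have hvanish : Set.EqOn f (0 : _ →ₗ[ℝ] ℝ) (mSupport μ) := fun x hx =>
    f.eq_zero_of_nonneg_of_zero_mem_intrinsicInterior h0 hconv (subset_convexHull ℝ _ hx)
  exact inner_self_eq_zero.mp (f.eqOn_span hvanish hspan : inner ℝ h h = 0)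

theorem stmt_6 (d : ℕ) (μ : Measure (EuclideanSpace ℝ (Fin d))) [IsProbabilityMeasure μ]
    (h0 : (0 : EuclideanSpace ℝ (Fin d)) ∈
      intrinsicInterior ℝ (convexHull ℝ (mSupport μ)))
    (h : EuclideanSpace ℝ (Fin d)) (hspan : h ∈ Submodule.span ℝ (mSupport μ))
    (hpos : ∀ᵐ x ∂μ, 0 ≤ (inner ℝ h x : ℝ)) :
    h = 0 :=
  stmt_6_general d μ h0 h hspan hpos
end

section
/- Let μ be a Borel probability measure on ℝ^d with support κ. If 0 does not lie in the relative interior of the convex hull of κ, then there exists a unit vector h ∈ span(κ) ∩ (−cone κ)° such that μ({x : (h,x) ≥ 0}) = 1 and μ({x : (h,x) > 0}) > 0. -/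
open MeasureTheory

/-- The conic hull of a set. -/
def coneHull {E : Type*} [AddCommMonoid E] [Module ℝ E] (s : Set E) : Set E :=
  {y | ∃ (c : ℝ) (x : E), 0 ≤ c ∧ x ∈ s ∧ y = c • x}

/-! Pass to the subspace `V` spanned by the support `κ`. If `0` lies in the affine span of `κ`,
that affine span is all of `V`, so `0` is a boundary point of `conv κ` in `V` and a supporting
hyperplane at `0` gives `h`; otherwise `0` is strictly separated from the closed affine span.
A nonzero `h ∈ V` cannot be orthogonal to all of `κ`, so some point of `κ` lies in the open
half-space `(h, x) > 0`; as `μ(κᶜ) = 0` and every neighbourhood of a point of `κ` has positive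
measure, both measure statements follow. -/

open Submodule

lemma mSupport_eq_support {X : Type*} [MeasurableSpace X] [PseudoMetricSpace X] (μ : Measure X) :
    mSupport μ = μ.support := by
  ext x
  exact Metric.nhds_basis_ball.mem_measureSupport.symm

lemma affineSpan_eq_top_of_zero_mem {k V : Type*} [Ring k] [AddCommGroup V]
    [Module k V] {s : Set V} (h0 : (0 : V) ∈ affineSpan k s) (hs : span k s = ⊤) :
    affineSpan k s = ⊤ := by
  refine SetLike.coe_injective ?_
  rw [← affineSpan_insert_eq_affineSpan k h0, affineSpan_insert_zero, hs]
  rfl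

lemma exists_inner_ne_zero_of_mem_span {𝕜 G : Type*} [RCLike 𝕜] [NormedAddCommGroup G]
    [InnerProductSpace 𝕜 G] {s : Set G} {h : G} (hh : h ∈ span 𝕜 s) (h0 : h ≠ 0) :
    ∃ x ∈ s, inner 𝕜 h x ≠ 0 := by
  by_contra! hs
  have : span 𝕜 s ≤ LinearMap.ker (innerₛₗ 𝕜 h) := span_le.2 hs
  exact h0 (inner_self_eq_zero.1 (this hh))

section Separation

variable {F : Type*} [NormedAddCommGroup F] [NormedSpace ℝ F] [FiniteDimensional ℝ F]

lemma exists_dual_ne_zero_nonneg_of_zero_notMem_intrinsicInterior {s : Set F} (hne : s.Nonempty)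
    (hs : span ℝ s = ⊤) (h0 : (0 : F) ∉ intrinsicInterior ℝ (convexHull ℝ s)) :
    ∃ f : StrongDual ℝ F, f ≠ 0 ∧ ∀ x ∈ s, 0 ≤ f x := by
  by_cases h0s : (0 : F) ∈ affineSpan ℝ s
  · obtain ⟨f, hf, hle⟩ := geometric_hahn_banach_of_nonempty_interior_point
      (convex_convexHull ℝ s) (fun h ↦ h0 (interior_subset_intrinsicInterior h))
      (interior_convexHull_nonempty_iff_affineSpan_eq_top.2
        (affineSpan_eq_top_of_zero_mem h0s hs))
    refine ⟨-f, neg_ne_zero.2 hf, fun x hx ↦ ?_⟩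
    simpa using hle x (subset_convexHull ℝ s hx)
  · obtain ⟨f, u, hf0, hfs⟩ := geometric_hahn_banach_point_closed (affineSpan ℝ s).convex
      (affineSpan ℝ s).closed_of_finiteDimensional h0s
    have hpos : ∀ x ∈ s, 0 < f x := fun x hx ↦ by
      simpa using hf0.trans (hfs x (subset_affineSpan ℝ s hx))
    obtain ⟨x, hx⟩ := hne
    exact ⟨f, fun hf ↦ by simpa [hf] using hpos x hx, fun y hy ↦ (hpos y hy).le⟩

end Separation

section InnerProduct

variable {E : Type*} [NormedAddCommGroup E] [InnerProductSpace ℝ E] [FiniteDimensional ℝ E]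

lemma exists_mem_span_ne_zero_inner_nonneg {s : Set E} (hne : s.Nonempty)
    (h0 : (0 : E) ∉ intrinsicInterior ℝ (convexHull ℝ s)) :
    ∃ h ∈ span ℝ s, h ≠ 0 ∧ ∀ x ∈ s, 0 ≤ (inner ℝ h x : ℝ) := by
  set V := span ℝ s
  set t : Set V := (↑) ⁻¹' s
  have hts : V.subtype '' t = s :=
    Set.image_preimage_eq_of_subset fun x hx ↦ ⟨⟨x, subset_span hx⟩, rfl⟩
  have ht0 : (0 : V) ∉ intrinsicInterior ℝ (convexHull ℝ t) := fun ht ↦ h0 <| by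
    rw [← hts, ← LinearMap.image_convexHull]
    exact (V.subtypeₗᵢ.toAffineIsometry.intrinsicInterior_image _).symm ▸ ⟨0, ht, rfl⟩
  obtain ⟨x, hx⟩ := hne
  obtain ⟨f, hf, hft⟩ := exists_dual_ne_zero_nonneg_of_zero_notMem_intrinsicInterior
    ⟨⟨x, subset_span hx⟩, hx⟩ span_span_coe_preimage ht0
  set h := (InnerProductSpace.toDual ℝ V).symm f
  refine ⟨h, h.2, fun h0 ↦ hf ?_, fun y hy ↦ ?_⟩
  · simpa [h, ZeroMemClass.coe_eq_zero] using h0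
  · have := hft ⟨y, subset_span hy⟩ hy
    rwa [← InnerProductSpace.toDual_symm_apply, Submodule.coe_inner] at this

lemma exists_unit_mem_span_inner_nonneg_of_zero_notMem_intrinsicInterior
    {s : Set E} (hne : s.Nonempty) (h0 : (0 : E) ∉ intrinsicInterior ℝ (convexHull ℝ s)) :
    ∃ h : E, ‖h‖ = 1 ∧ h ∈ span ℝ s ∧ (∀ x ∈ s, 0 ≤ (inner ℝ h x : ℝ)) ∧
      ∃ x ∈ s, 0 < (inner ℝ h x : ℝ) := by
  obtain ⟨h, hs, hh0, hnonneg⟩ := exists_mem_span_ne_zero_inner_nonneg hne h0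
  obtain ⟨x, hx, hxh⟩ := exists_inner_ne_zero_of_mem_span hs hh0
  have hc : 0 < ‖h‖⁻¹ := inv_pos.2 (norm_pos_iff.2 hh0)
  refine ⟨‖h‖⁻¹ • h, norm_smul_inv_norm hh0, smul_mem _ _ hs, fun y hy ↦ ?_, x, hx, ?_⟩
  · rw [real_inner_smul_left]
    exact mul_nonneg hc.le (hnonneg y hy)
  · rw [real_inner_smul_left]
    exact mul_pos hc ((hnonneg x hx).lt_of_ne' hxh)

end InnerProduct

theorem stmt_7 (d : ℕ) (μ : Measure (EuclideanSpace ℝ (Fin d))) [IsProbabilityMeasure μ]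
    (h0 : (0 : EuclideanSpace ℝ (Fin d)) ∉
      intrinsicInterior ℝ (convexHull ℝ (mSupport μ))) :
    ∃ h : EuclideanSpace ℝ (Fin d), ‖h‖ = 1 ∧ h ∈ Submodule.span ℝ (mSupport μ) ∧
      (∀ y ∈ -coneHull (mSupport μ), (inner ℝ y h : ℝ) ≤ 0) ∧
      μ {x | 0 ≤ (inner ℝ h x : ℝ)} = 1 ∧ 0 < μ {x | 0 < (inner ℝ h x : ℝ)} := by
  have hsupp := mSupport_eq_support μ
  have hne : (mSupport μ).Nonempty :=
    hsupp ▸ Measure.nonempty_support (IsProbabilityMeasure.ne_zero μ)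
  obtain ⟨h, hh1, hspan, hnonneg, x, hx, hpos⟩ :=
    exists_unit_mem_span_inner_nonneg_of_zero_notMem_intrinsicInterior hne h0
  rw [hsupp] at hnonneg hx
  refine ⟨h, hh1, hspan, ?_, ?_, ?_⟩
  · rintro y ⟨c, z, hc, hz, hy⟩
    rw [← neg_neg y, hy, inner_neg_left, real_inner_smul_left, real_inner_comm, neg_nonpos]
    exact mul_nonneg hc (hnonneg z (hsupp ▸ hz))
  · exact (mem_ae_iff_prob_eq_one (measurableSet_le measurable_const (by fun_prop))).1
      (Filter.mem_of_superset Measure.support_mem_ae hnonneg)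
  · exact (Measure.mem_support_iff_forall x).1 hx _
      ((isOpen_lt continuous_const (by fun_prop)).mem_nhds hpos)
end

section
/- Let F : Ω ⇉ ℝ^d be a set-valued mapping such that F(ω) is convex with nonempty interior for every ω. If {ω : x ∈ F(ω)} ∈ H for every x ∈ ℝ^d, then F is H-measurable, i.e. {ω : F(ω) ∩ V ≠ ∅} ∈ H for every open V ⊆ ℝ^d. -/
/-! A set contained in the closure of its interior meets an open set `V` iff its interior does,
hence iff it contains a point of a fixed countable dense subset of `V`. So the hit set
`{ω | F ω ∩ V ≠ ∅}` is the countable union of the measurable sets `{ω | q ∈ F ω}` over those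
points `q`. Convex sets with nonempty interior have this property. -/

open MeasureTheory

theorem Convex.subset_closure_interior {𝕜 E : Type*} [Field 𝕜] [LinearOrder 𝕜]
    [IsStrictOrderedRing 𝕜] [AddCommGroup E] [Module 𝕜 E] [TopologicalSpace E]
    [IsTopologicalAddGroup E] [TopologicalSpace 𝕜] [OrderTopology 𝕜] [ContinuousSMul 𝕜 E]
    {s : Set E} (hs : Convex 𝕜 s) (hs' : (interior s).Nonempty) :
    s ⊆ closure (interior s) :=
  hs.closure_interior_eq_closure_of_nonempty_interior hs' ▸ subset_closure

theorem Dense.exists_mem_of_subset_closure_interior {X : Type*} [TopologicalSpace X]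
    {D s V : Set X} (hD : Dense D) (hs : s ⊆ closure (interior s)) (hV : IsOpen V)
    (hsV : (s ∩ V).Nonempty) : ∃ q ∈ D ∩ V, q ∈ s := by
  have hint : (interior s ∩ V).Nonempty :=
    (closure_inter_open_nonempty_iff hV).1 (hsV.mono (Set.inter_subset_inter_left V hs))
  obtain ⟨q, hqD, hqint, hqV⟩ := hD.exists_mem_open (isOpen_interior.inter hV) hint
  exact ⟨q, ⟨hqD, hqV⟩, interior_subset hqint⟩

theorem measurableSet_setOf_inter_nonempty_of_subset_closure_interior {Ω X : Type*}
    [TopologicalSpace X] [TopologicalSpace.SeparableSpace X] [MeasurableSpace Ω]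
    {F : Ω → Set X} (hF : ∀ ω, F ω ⊆ closure (interior (F ω)))
    (hmem : ∀ x, MeasurableSet {ω | x ∈ F ω}) {V : Set X} (hV : IsOpen V) :
    MeasurableSet {ω | (F ω ∩ V).Nonempty} := by
  obtain ⟨D, hDcount, hD⟩ := TopologicalSpace.exists_countable_dense X
  have hunion : {ω | (F ω ∩ V).Nonempty} = ⋃ q ∈ D ∩ V, {ω | q ∈ F ω} := by
    ext ω
    simp only [Set.mem_ofPred_eq, Set.mem_iUnion, exists_prop]
    refine ⟨hD.exists_mem_of_subset_closure_interior (hF ω) hV, ?_⟩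
    rintro ⟨q, ⟨-, hqV⟩, hqF⟩
    exact ⟨q, hqF, hqV⟩
  rw [hunion]
  exact .biUnion (hDcount.mono Set.inter_subset_left) fun q _ ↦ hmem q

theorem stmt_9 {Ω : Type*} (d : ℕ) (H : MeasurableSpace Ω)
    (F : Ω → Set (EuclideanSpace ℝ (Fin d)))
    (hconv : ∀ ω, Convex ℝ (F ω))
    (hint : ∀ ω, (interior (F ω)).Nonempty)
    (hx : ∀ x : EuclideanSpace ℝ (Fin d), MeasurableSet[H] {ω | x ∈ F ω}) :
    ∀ V : Set (EuclideanSpace ℝ (Fin d)), IsOpen V →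
      MeasurableSet[H] {ω | (F ω ∩ V).Nonempty} := fun _ hV ↦
  measurableSet_setOf_inter_nonempty_of_subset_closure_interior
    (fun ω ↦ (hconv ω).subset_closure_interior (hint ω)) hx hV
end
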